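/- Let n ≥ 3 be an integer and 1 ≤ l ≤ n−1. The function j_l := ∂U/∂y_l is a solution of the linearized problem: j_l is harmonic on the open half-space {y_n > 0}, it satisfies ∂j_l/∂y_n(ȳ, 0) + n · U(ȳ, 0)^{2/(n−2)} · j_l(ȳ, 0) = 0 for every ȳ ∈ ℝ^{n−1}, and both j_l and its gradient are square-integrable over ℝ^n_+ (i.e. j_l ∈ H¹(ℝ^n_+)). -/

import Mathlib

/-!
Write `S(y) = (1 + y_n)² + |ȳ|²`, so that `U = S^a` with `a = -(n - 2)/2` and
`j_l = 2a y_l S^(a-1)`. Differentiating twice along an arbitrary direction and summing over the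
coordinate directions gives `Δ j_l = 4a(a - 1)(2a + n - 2) y_l S^(a-2)`, while
`∂_n j_l = 2(a - 1)(1 + y_n) S⁻¹ j_l` and `U^(2/(n-2)) = S⁻¹`; both the equation and the boundary
condition reduce to `2a + n - 2 = 0`. For `H¹`: `|j_l| ≲ S^(a-1/2)` and `|∇j_l| ≲ S^(a-1)`, and
`S ≥ 1 + |y|²` on the half-space, so `j_l²` and `|∇j_l|²` are dominated by `(1 + |y|²)^(1-n)` and
`(1 + |y|²)^(-n)`, which are integrable on `ℝ^n`.
-/

open MeasureTheory Set

/-- Points of `ℝ^n` written as `y = (ȳ, y_n)` with `ȳ ∈ ℝ^{n-1}`. -/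
abbrev HalfSpacePt (n : ℕ) := EuclideanSpace ℝ (Fin (n - 1)) × ℝ

/-- The standard bubble `U(y) = [(1+y_n)² + |ȳ|²]^{-(n-2)/2}`. -/
noncomputable def stdBubble (n : ℕ) (p : HalfSpacePt n) : ℝ :=
  ((1 + p.2) ^ 2 + ‖p.1‖ ^ 2) ^ (-(((n : ℝ) - 2) / 2))

/-- The `i`-th horizontal coordinate direction in `ℝ^{n-1} × ℝ`. -/
noncomputable def eH (n : ℕ) (i : Fin (n - 1)) : HalfSpacePt n := (EuclideanSpace.single i 1, 0)

/-- The vertical coordinate direction in `ℝ^{n-1} × ℝ`. -/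
def eV (n : ℕ) : HalfSpacePt n := (0, 1)

/-- Second derivative of `f` at `p` in the direction `v` (twice). -/
noncomputable def secondDeriv (n : ℕ) (f : HalfSpacePt n → ℝ) (v p : HalfSpacePt n) : ℝ :=
  fderiv ℝ (fun z => fderiv ℝ f z v) p v

/-- The Laplacian: sum of the pure second derivatives in the `n` coordinate directions. -/
noncomputable def lap (n : ℕ) (f : HalfSpacePt n → ℝ) (p : HalfSpacePt n) : ℝ :=
  (∑ i, secondDeriv n f (eH n i) p) + secondDeriv n f (eV n) p

/-- The closed upper half-space `ℝ^n_+`. -/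
def upperHalfSpace (n : ℕ) : Set (HalfSpacePt n) := {p | 0 ≤ p.2}

open Filter Topology RealInnerProductSpace

namespace StdBubble

section Calculus

variable {E : Type*} [NormedAddCommGroup E]

/-- `|y - (0, -1)|²`, written out because the norm on a product is the sup norm. -/
def base (p : E × ℝ) : ℝ := (1 + p.2) ^ 2 + ‖p.1‖ ^ 2

lemma continuous_base : Continuous (base (E := E)) := by
  unfold base; fun_prop

lemma eventually_base_pos {p : E × ℝ} (hp : 0 < base p) : ∀ᶠ q in 𝓝 p, 0 < base q :=
  (continuous_base.tendsto p).eventually (lt_mem_nhds hp)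

lemma base_pos {p : E × ℝ} (hp : 0 ≤ p.2) : 0 < base p := by
  unfold base; nlinarith [sq_nonneg ‖p.1‖]

lemma base_nonneg (p : E × ℝ) : 0 ≤ base p := by
  unfold base; positivity

lemma abs_one_add_snd_le_sqrt_base (p : E × ℝ) : |1 + p.2| ≤ √(base p) :=
  Real.abs_le_sqrt (le_add_of_nonneg_right (sq_nonneg _))

lemma norm_fst_le_sqrt_base (p : E × ℝ) : ‖p.1‖ ≤ √(base p) :=
  (Real.le_sqrt (norm_nonneg _) (base_nonneg p)).2 (le_add_of_nonneg_left (sq_nonneg _))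

variable [InnerProductSpace ℝ E]

noncomputable def fderivBase (p : E × ℝ) : E × ℝ →L[ℝ] ℝ :=
  (2 * (1 + p.2)) • ContinuousLinearMap.snd ℝ E ℝ +
    (2 : ℝ) • (innerSL ℝ p.1).comp (ContinuousLinearMap.fst ℝ E ℝ)

@[simp]
lemma fderivBase_apply (p v : E × ℝ) :
    fderivBase p v = 2 * (1 + p.2) * v.2 + 2 * ⟪p.1, v.1⟫ := by
  simp [fderivBase]

lemma hasFDerivAt_inner_fst (e : E) (p : E × ℝ) :
    HasFDerivAt (fun q : E × ℝ => ⟪e, q.1⟫)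
      ((innerSL ℝ e).comp (ContinuousLinearMap.fst ℝ E ℝ)) p :=
  ((innerSL ℝ e).comp (ContinuousLinearMap.fst ℝ E ℝ)).hasFDerivAt

lemma hasFDerivAt_base (p : E × ℝ) : HasFDerivAt base (fderivBase p) p := by
  have h : HasFDerivAt base _ p :=
    (((hasFDerivAt_snd (p := p)).const_add 1).pow 2).add (hasFDerivAt_fst (p := p)).norm_sq
  refine h.congr_fderiv (ContinuousLinearMap.ext fun v => ?_)
  simp only [add_apply, smul_apply,
    ContinuousLinearMap.comp_apply, ContinuousLinearMap.coe_snd', ContinuousLinearMap.coe_fst',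
    coe_innerSL_apply, smul_eq_mul, nsmul_eq_mul, fderivBase_apply]
  ring

lemma hasFDerivAt_fderivBase_apply (p v : E × ℝ) :
    HasFDerivAt (fun q => fderivBase q v) ((2 * v.2) • ContinuousLinearMap.snd ℝ E ℝ +
      (2 : ℝ) • (innerSL ℝ v.1).comp (ContinuousLinearMap.fst ℝ E ℝ)) p := by
  have h : HasFDerivAt (fun q : E × ℝ => 2 * (1 + q.2) * v.2 + 2 * ⟪v.1, q.1⟫) _ p :=
    ((((hasFDerivAt_snd (𝕜 := ℝ) (p := p)).const_add 1).const_mul 2).mul_const v.2).add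
      ((hasFDerivAt_inner_fst v.1 p).const_mul 2)
  simp only [fderivBase_apply, real_inner_comm v.1]
  refine h.congr_fderiv (ContinuousLinearMap.ext fun w => ?_)
  simp only [add_apply, smul_apply,
    ContinuousLinearMap.comp_apply, ContinuousLinearMap.coe_snd', ContinuousLinearMap.coe_fst',
    coe_innerSL_apply, smul_eq_mul]
  ring

lemma hasFDerivAt_base_rpow {p : E × ℝ} (hp : 0 < base p) (c : ℝ) :
    HasFDerivAt (fun q => base q ^ c) ((c * base p ^ (c - 1)) • fderivBase p) p :=
  (hasFDerivAt_base p).rpow_const (Or.inl hp.ne')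

noncomputable def horizDeriv (a : ℝ) (e : E) (q : E × ℝ) : ℝ :=
  2 * a * ⟪e, q.1⟫ * base q ^ (a - 1)

lemma fderiv_base_rpow_horizontal {p : E × ℝ} (hp : 0 < base p) (a : ℝ) (e : E) :
    fderiv ℝ (fun y => base y ^ a) p (e, 0) = horizDeriv a e p := by
  rw [(hasFDerivAt_base_rpow hp a).fderiv, horizDeriv]
  simp only [smul_apply, fderivBase_apply, smul_eq_mul, real_inner_comm]
  ring

lemma fderiv_base_rpow_eventuallyEq {p : E × ℝ} (hp : 0 < base p) (a : ℝ) (e : E) :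
    (fun q => fderiv ℝ (fun y => base y ^ a) q (e, 0)) =ᶠ[𝓝 p] horizDeriv a e := by
  filter_upwards [eventually_base_pos hp] with q hq using fderiv_base_rpow_horizontal hq a e

noncomputable def dirDerivHorizDeriv (a : ℝ) (e : E) (v q : E × ℝ) : ℝ :=
  2 * a * ((a - 1) * ⟪e, q.1⟫ * base q ^ (a - 2) * fderivBase q v +
    base q ^ (a - 1) * ⟪e, v.1⟫)

lemma fderiv_horizDeriv_apply {p : E × ℝ} (hp : 0 < base p) (a : ℝ) (e : E) (v : E × ℝ) :
    fderiv ℝ (horizDeriv a e) p v = dirDerivHorizDeriv a e v p := by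
  have h : HasFDerivAt (horizDeriv a e) _ p :=
    ((hasFDerivAt_inner_fst e p).const_mul (2 * a)).mul (hasFDerivAt_base_rpow hp (a - 1))
  rw [h.fderiv, dirDerivHorizDeriv, show a - 1 - 1 = a - 2 by ring]
  simp only [add_apply, smul_apply,
    ContinuousLinearMap.comp_apply, ContinuousLinearMap.coe_fst', coe_innerSL_apply, smul_eq_mul]
  ring

lemma fderiv_dirDerivHorizDeriv_apply_self {p : E × ℝ} (hp : 0 < base p) (a : ℝ) (e : E)
    (v : E × ℝ) :
    fderiv ℝ (dirDerivHorizDeriv a e v) p v = 2 * a * (a - 1) * base p ^ (a - 3) *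
      (2 * ⟪e, v.1⟫ * base p * fderivBase p v + (a - 2) * ⟪e, p.1⟫ * fderivBase p v ^ 2 +
        2 * ⟪e, p.1⟫ * base p * (‖v.1‖ ^ 2 + v.2 ^ 2)) := by
  have h : HasFDerivAt (dirDerivHorizDeriv a e v) _ p :=
    (((((hasFDerivAt_inner_fst e p).const_mul (a - 1)).mul
      (hasFDerivAt_base_rpow hp (a - 2))).mul (hasFDerivAt_fderivBase_apply p v)).add
      ((hasFDerivAt_base_rpow hp (a - 1)).mul_const ⟪e, v.1⟫)).const_mul (2 * a)
  have h2 : base p ^ (a - 2) = base p ^ (a - 3) * base p := by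
    rw [← Real.rpow_add_one hp.ne']; ring_nf
  rw [h.fderiv, show a - 2 - 1 = a - 3 by ring, show a - 1 - 1 = a - 2 by ring]
  simp only [Pi.mul_apply, h2, add_apply, smul_apply,
    ContinuousLinearMap.comp_apply, ContinuousLinearMap.coe_snd', ContinuousLinearMap.coe_fst',
    coe_innerSL_apply, smul_eq_mul, real_inner_self_eq_norm_sq, fderivBase_apply]
  ring

lemma secondDeriv_fderiv_base_rpow {p : E × ℝ} (hp : 0 < base p) (a : ℝ) (e : E)
    (v : E × ℝ) :
    fderiv ℝ (fun z => fderiv ℝ (fun q => fderiv ℝ (fun y => base y ^ a) q (e, 0)) z v) p v =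
      2 * a * (a - 1) * base p ^ (a - 3) *
        (2 * ⟪e, v.1⟫ * base p * fderivBase p v + (a - 2) * ⟪e, p.1⟫ * fderivBase p v ^ 2 +
          2 * ⟪e, p.1⟫ * base p * (‖v.1‖ ^ 2 + v.2 ^ 2)) := by
  have h : (fun z => fderiv ℝ (fun q => fderiv ℝ (fun y => base y ^ a) q (e, 0)) z v)
      =ᶠ[𝓝 p] dirDerivHorizDeriv a e v := by
    filter_upwards [eventually_base_pos hp] with z hz
    rw [(fderiv_base_rpow_eventuallyEq hz a e).fderiv_eq, fderiv_horizDeriv_apply hz]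
  rw [h.fderiv_eq, fderiv_dirDerivHorizDeriv_apply_self hp]

lemma fderiv_fderiv_base_rpow_vertical {p : E × ℝ} (hp : 0 < base p) (a : ℝ) (e : E) :
    fderiv ℝ (fun q => fderiv ℝ (fun y => base y ^ a) q (e, 0)) p (0, 1) =
      2 * (a - 1) * (1 + p.2) * (base p)⁻¹ * horizDeriv a e p := by
  have h : base p ^ (a - 2) = base p ^ (a - 1) * (base p)⁻¹ := by
    rw [← Real.rpow_neg_one, ← Real.rpow_add hp]; ring_nf
  rw [(fderiv_base_rpow_eventuallyEq hp a e).fderiv_eq, fderiv_horizDeriv_apply hp,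
    dirDerivHorizDeriv, horizDeriv, h]
  simp only [fderivBase_apply, inner_zero_right]
  ring

lemma abs_fderivBase_le (p v : E × ℝ) : |fderivBase p v| ≤ 4 * √(base p) * ‖v‖ := by
  have h1 : |1 + p.2| * |v.2| ≤ √(base p) * ‖v‖ :=
    mul_le_mul (abs_one_add_snd_le_sqrt_base p) (norm_snd_le v) (abs_nonneg _) (by positivity)
  have h2 : |⟪p.1, v.1⟫| ≤ √(base p) * ‖v‖ := (abs_real_inner_le_norm _ _).trans
    (mul_le_mul (norm_fst_le_sqrt_base p) (norm_fst_le v) (norm_nonneg _) (by positivity))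
  rw [fderivBase_apply]
  calc _ ≤ |2 * (1 + p.2) * v.2| + |2 * ⟪p.1, v.1⟫| := abs_add_le _ _
    _ = 2 * (|1 + p.2| * |v.2|) + 2 * |⟪p.1, v.1⟫| := by simp only [abs_mul, abs_two]; ring
    _ ≤ _ := by linarith

lemma abs_inner_fst_le (e : E) (p : E × ℝ) : |⟪e, p.1⟫| ≤ ‖e‖ * √(base p) :=
  (abs_real_inner_le_norm e p.1).trans
    (mul_le_mul_of_nonneg_left (norm_fst_le_sqrt_base p) (norm_nonneg e))

lemma abs_fderiv_base_rpow_le {p : E × ℝ} (hp : 0 < base p) (a : ℝ) (e : E) :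
    |fderiv ℝ (fun y => base y ^ a) p (e, 0)| ≤ 2 * |a| * ‖e‖ * base p ^ (a - 1 / 2) := by
  have hS : √(base p) * base p ^ (a - 1) = base p ^ (a - 1 / 2) := by
    rw [Real.sqrt_eq_rpow, ← Real.rpow_add hp]; ring_nf
  rw [fderiv_base_rpow_horizontal hp a e, horizDeriv, abs_mul, abs_mul,
    abs_mul, abs_two, abs_of_pos (Real.rpow_pos_of_pos hp _), ← hS]
  calc _ ≤ 2 * |a| * (‖e‖ * √(base p)) * base p ^ (a - 1) := by gcongr; exact abs_inner_fst_le e p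
    _ = _ := by ring

lemma norm_fderiv_fderiv_base_rpow_le {p : E × ℝ} (hp : 0 < base p) (a : ℝ) (e : E) :
    ‖fderiv ℝ (fun q => fderiv ℝ (fun y => base y ^ a) q (e, 0)) p‖ ≤
      2 * |a| * (4 * |a - 1| + 1) * ‖e‖ * base p ^ (a - 1) := by
  have hS : √(base p) * √(base p) * base p ^ (a - 2) = base p ^ (a - 1) := by
    rw [Real.mul_self_sqrt hp.le, mul_comm, ← Real.rpow_add_one hp.ne']; ring_nf
  rw [(fderiv_base_rpow_eventuallyEq hp a e).fderiv_eq]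
  refine ContinuousLinearMap.opNorm_le_bound _ (by positivity) fun v => ?_
  rw [fderiv_horizDeriv_apply hp, dirDerivHorizDeriv, Real.norm_eq_abs]
  have hx := abs_inner_fst_le e p
  have hv : |⟪e, v.1⟫| ≤ ‖e‖ * ‖v‖ := (abs_real_inner_le_norm e v.1).trans
    (mul_le_mul_of_nonneg_left (norm_fst_le v) (norm_nonneg e))
  have hD := abs_fderivBase_le p v
  have h2 := Real.rpow_pos_of_pos hp (a - 2)
  have h1 := Real.rpow_pos_of_pos hp (a - 1)
  calc _ ≤ 2 * |a| * (|a - 1| * |⟪e, p.1⟫| * base p ^ (a - 2) * |fderivBase p v| +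
        base p ^ (a - 1) * |⟪e, v.1⟫|) := by
        rw [abs_mul, abs_mul, abs_two]
        gcongr
        refine (abs_add_le _ _).trans_eq ?_
        simp only [abs_mul, abs_of_pos h1, abs_of_pos h2]
    _ ≤ 2 * |a| * (|a - 1| * (‖e‖ * √(base p)) * base p ^ (a - 2) * (4 * √(base p) * ‖v‖) +
        base p ^ (a - 1) * (‖e‖ * ‖v‖)) := by gcongr
    _ = _ := by rw [← hS]; ring

end Calculus

section HalfSpace

variable {n : ℕ}

lemma lap_fderiv_base_rpow (hn : 1 ≤ n) {p : HalfSpacePt n} (hp : 0 < base p) (a : ℝ)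
    (l : Fin (n - 1)) :
    lap n (fun z => fderiv ℝ (fun y => base y ^ a) z (eH n l)) p =
      4 * a * (a - 1) * (2 * a + n - 2) * p.1 l * base p ^ (a - 2) := by
  simp only [lap, secondDeriv, eH, eV, secondDeriv_fderiv_base_rpow hp]
  simp only [fderivBase_apply, EuclideanSpace.inner_single_left,
    EuclideanSpace.inner_single_right, PiLp.single_apply, MonoidWithZeroHom.map_ite_one_zero,
    mul_ite, mul_one, mul_zero, ite_mul, zero_mul, Real.ringHom_apply, one_mul, zero_add,
    PiLp.norm_single, norm_one, one_pow, zero_pow two_ne_zero, add_zero,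
    inner_zero_right, norm_zero]
  set x := p.1
  have h1 : ∑ i, (if i = l then 2 * base p * (2 * x i) else 0) = 4 * base p * x l := by
    simp only [Finset.sum_ite_eq', Finset.mem_univ, if_true]; ring
  have h2 : ∑ i, (a - 2) * x l * (2 * x i) ^ 2 = 4 * (a - 2) * x l * ‖x‖ ^ 2 := by
    simp_rw [EuclideanSpace.norm_sq_eq, Real.norm_eq_abs, sq_abs, Finset.mul_sum]
    congr 1; ext i; ring
  have h3 : ∑ _i : Fin (n - 1), 2 * x l * base p = 2 * (n - 1) * x l * base p := by
    simp only [Finset.sum_const, Finset.card_univ, Fintype.card_fin, nsmul_eq_mul,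
      Nat.cast_sub hn, Nat.cast_one]
    ring
  have h4 : base p ^ (a - 2) = base p ^ (a - 3) * base p := by
    rw [← Real.rpow_add_one hp.ne']; ring_nf
  rw [← Finset.mul_sum, Finset.sum_add_distrib, Finset.sum_add_distrib, h1, h2, h3, h4]
  simp only [base]
  ring

lemma one_add_norm_sq_le_base {p : HalfSpacePt n} (hp : 0 ≤ p.2) : 1 + ‖p‖ ^ 2 ≤ base p := by
  have h : ‖p‖ ^ 2 ≤ ‖p.1‖ ^ 2 + ‖p.2‖ ^ 2 := by
    rcases max_choice ‖p.1‖ ‖p.2‖ with h | h <;> rw [Prod.norm_def, h] <;>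
      nlinarith [sq_nonneg ‖p.1‖, sq_nonneg ‖p.2‖]
  rw [Real.norm_eq_abs, sq_abs] at h
  unfold base; nlinarith

lemma integrableOn_upperHalfSpace_of_norm_le (hn : 1 ≤ n) {F : Type*} [NormedAddCommGroup F]
    {f : HalfSpacePt n → F} (hf : AEStronglyMeasurable f) {C c : ℝ} (hc : (n : ℝ) < -2 * c)
    (hb : ∀ p ∈ upperHalfSpace n, ‖f p‖ ≤ C * base p ^ c) :
    IntegrableOn f (upperHalfSpace n) := by
  have : (volume : Measure (HalfSpacePt n)).IsAddHaarMeasure := by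
    rw [Measure.volume_eq_prod]; infer_instance
  have hdim : (Module.finrank ℝ (HalfSpacePt n) : ℝ) < -2 * c := by
    rwa [Module.finrank_prod, finrank_euclideanSpace_fin, Module.finrank_self,
      Nat.sub_add_cancel hn]
  have hg := (integrable_rpow_neg_one_add_norm_sq (μ := volume) hdim).const_mul |C|
  rw [show -(-2 * c) / 2 = c by ring] at hg
  refine hg.integrableOn.mono' hf.restrict
    (ae_restrict_of_forall_mem (isClosed_le continuous_const continuous_snd).measurableSet
      fun p hp => (hb p hp).trans ?_)
  have hc0 : c ≤ 0 := by linarith [(n.cast_nonneg : (0 : ℝ) ≤ n)]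
  calc C * base p ^ c ≤ |C| * base p ^ c :=
        mul_le_mul_of_nonneg_right (le_abs_self C) (Real.rpow_nonneg (base_nonneg p) c)
    _ ≤ |C| * (1 + ‖p‖ ^ 2) ^ c := mul_le_mul_of_nonneg_left
        (Real.rpow_le_rpow_of_nonpos (by positivity) (one_add_norm_sq_le_base hp) hc0)
        (abs_nonneg C)

lemma integrableOn_upperHalfSpace_norm_sq_of_norm_le (hn : 1 ≤ n) {F : Type*}
    [NormedAddCommGroup F] {f : HalfSpacePt n → F} (hf : AEStronglyMeasurable f) {C c : ℝ}
    (hc : (n : ℝ) < -4 * c) (hb : ∀ p ∈ upperHalfSpace n, ‖f p‖ ≤ C * base p ^ c) :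
    IntegrableOn (fun p => ‖f p‖ ^ 2) (upperHalfSpace n) := by
  refine integrableOn_upperHalfSpace_of_norm_le hn (hf.norm.pow 2) (C := C ^ 2) (c := c * 2)
    (by linarith) fun p hp => ?_
  rw [norm_pow, norm_norm, show c * 2 = c * ((2 : ℕ) : ℝ) by norm_num,
    Real.rpow_mul_natCast (base_nonneg p), ← mul_pow]
  exact pow_le_pow_left₀ (norm_nonneg _) (hb p hp) 2

lemma stdBubble_eq_base_rpow (n : ℕ) :
    stdBubble n = fun p => base p ^ (-(((n : ℝ) - 2) / 2)) :=
  rfl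

lemma stdBubble_rpow_two_div (hn : (n : ℝ) ≠ 2) (p : HalfSpacePt n) :
    stdBubble n p ^ (2 / ((n : ℝ) - 2)) = (base p)⁻¹ := by
  rw [stdBubble_eq_base_rpow, ← Real.rpow_mul (base_nonneg p), ← Real.rpow_neg_one]
  congr 1
  field_simp [sub_ne_zero.2 hn]

end HalfSpace

end StdBubble

theorem stmt10 (n : ℕ) (hn : 3 ≤ n) (l : Fin (n - 1)) :
    (∀ p : HalfSpacePt n, 0 < p.2 →
        lap n (fun z => fderiv ℝ (stdBubble n) z (eH n l)) p = 0) ∧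
    (∀ z : EuclideanSpace ℝ (Fin (n - 1)),
        fderiv ℝ (fun q => fderiv ℝ (stdBubble n) q (eH n l)) (z, 0) (eV n) +
          (n : ℝ) * stdBubble n (z, 0) ^ (2 / ((n : ℝ) - 2)) *
            fderiv ℝ (stdBubble n) (z, 0) (eH n l) = 0) ∧
    IntegrableOn (fun p : HalfSpacePt n => (fderiv ℝ (stdBubble n) p (eH n l)) ^ 2)
      (upperHalfSpace n) ∧
    IntegrableOn
      (fun p : HalfSpacePt n => ‖fderiv ℝ (fun q => fderiv ℝ (stdBubble n) q (eH n l)) p‖ ^ 2)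
      (upperHalfSpace n) := by
  open StdBubble in
  have hn3 : (3 : ℝ) ≤ n := by exact_mod_cast hn
  refine ⟨fun p hp => ?_, fun z => ?_, ?_, ?_⟩
  · rw [stdBubble_eq_base_rpow, lap_fderiv_base_rpow (by omega) (base_pos hp.le)]
    ring
  · have hz : 0 < base ((z, 0) : HalfSpacePt n) := base_pos le_rfl
    rw [stdBubble_rpow_two_div (by linarith), stdBubble_eq_base_rpow, eH, eV,
      fderiv_fderiv_base_rpow_vertical hz, fderiv_base_rpow_horizontal hz]
    dsimp only
    ring
  · have h := integrableOn_upperHalfSpace_norm_sq_of_norm_le (by omega)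
      (measurable_fderiv_apply_const ℝ (stdBubble n) (eH n l)).aestronglyMeasurable
      (c := -(((n : ℝ) - 2) / 2) - 1 / 2) (by linarith) fun p hp =>
        (Real.norm_eq_abs _).trans_le (abs_fderiv_base_rpow_le (base_pos hp) _ _)
    simpa only [Real.norm_eq_abs, sq_abs] using h
  · exact integrableOn_upperHalfSpace_norm_sq_of_norm_le (by omega)
      (measurable_fderiv ℝ _).aestronglyMeasurable (c := -(((n : ℝ) - 2) / 2) - 1)
      (by linarith) fun p hp => norm_fderiv_fderiv_base_rpow_le (base_pos hp) _ _
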